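/- Let d, d_a be natural numbers, d₊ = d + d_a, and N = 2^{d₊}. Let E₁, …, E_n be Kraus-form quantum channels on N×N complex matrices, let Û₀ be a 2^d×2^d unitary matrix, and let Û₁, …, Û_n be N×N unitary matrices. Let σ be a 2^d×2^d density matrix and a ∈ ℂ^{2^{d_a}} a unit vector. Then ‖(E_n ∘ ⋯ ∘ E₁)(σ ⊗ aaᴴ) − (Ad_{Û_n} ∘ E_n ∘ ⋯ ∘ Ad_{Û₁} ∘ E₁)((Û₀ σ Û₀ᴴ) ⊗ aaᴴ)‖₁ ≤ 2 ( inf_{φ₀ ∈ ℂ, |φ₀| = 1} ‖I_{2^d} − φ₀ Û₀‖_op + Σ_{i=1}^n inf_{φ_i ∈ ℂ, |φ_i| = 1} ‖I_N − φ_i Û_i‖_op ), where Ad_U(ρ) = U ρ Uᴴ and ⊗ is the Kronecker product. -/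

import Mathlib

open Matrix
open scoped Kronecker ComplexOrder

/-- The ℓ²-operator norm (largest singular value) of a complex square matrix. -/
noncomputable def opNorm {n : ℕ} (A : Matrix (Fin n) (Fin n) ℂ) : ℝ :=
  ‖Matrix.toEuclideanCLM (𝕜 := ℂ) A‖

/-- The trace norm `‖A‖₁ = Tr √(AᴴA)` of a complex square matrix. -/
noncomputable def traceNorm {n : ℕ} (A : Matrix (Fin n) (Fin n) ℂ) : ℝ :=
  (((Matrix.posSemidef_conjTranspose_mul_self A).1.eigenvectorUnitary : Matrix (Fin n) (Fin n) ℂ) *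
    Matrix.diagonal (((↑) : ℝ → ℂ) ∘ (√·) ∘ (Matrix.posSemidef_conjTranspose_mul_self A).1.eigenvalues) *
    (star (Matrix.posSemidef_conjTranspose_mul_self A).1.eigenvectorUnitary :
      Matrix (Fin n) (Fin n) ℂ)).trace.re

/-- A Kraus-form quantum channel: `Φ ρ = ∑ j, K j * ρ * (K j)ᴴ` for a finite family
of matrices with `∑ j, (K j)ᴴ * K j = 1`. -/
def IsKrausChannel {N : ℕ}
    (Φ : Matrix (Fin N) (Fin N) ℂ → Matrix (Fin N) (Fin N) ℂ) : Prop :=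
  ∃ (m : ℕ) (K : Fin m → Matrix (Fin N) (Fin N) ℂ),
    (∑ j, (K j)ᴴ * K j = 1) ∧ ∀ ρ, Φ ρ = ∑ j, K j * ρ * (K j)ᴴ

/-!
Compare the two circuits layer by layer. For a Hermitian `X`, the sign matrix `S = cfc sign X` has
operator norm at most one and satisfies `S X = |X|`, `S |X| = X`; together with
`|Tr(M P)| ≤ ‖M‖ Tr P` for `P ≥ 0` this gives `‖X‖₁ = max_{‖M‖ ≤ 1} Re Tr(M X)`, hence the
triangle inequality on Hermitian matrices. A Kraus channel does not increase the trace norm of a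
Hermitian `X`, since it maps `X⁺` and `X⁻` to positive matrices of the same traces. For a state `ρ`,
a unitary `W` and a phase `φ`, `ρ - WρWᴴ = (1 - φW)ρ + φWρ(1 - φW)ᴴ`, so
`‖ρ - WρWᴴ‖₁ ≤ 2‖1 - φW‖`. The ancilla embedding `ρ ↦ ρ ⊗ aaᴴ` preserves the trace norm, and
telescoping through the `n` layers gives the bound.
-/

open scoped MatrixOrder Matrix.Norms.L2Operator

namespace Matrix

lemma sub_kronecker {ι κ R : Type*} [Ring R] (A B : Matrix ι ι R) (C : Matrix κ κ R) :
    (A - B) ⊗ₖ C = A ⊗ₖ C - B ⊗ₖ C := by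
  ext
  simp [sub_mul]

lemma reindex_sub {ι κ R : Type*} [Sub R] (e : ι ≃ κ) (A B : Matrix ι ι R) :
    reindex e e (A - B) = reindex e e A - reindex e e B :=
  rfl

lemma trace_reindex {ι κ R : Type*} [Fintype ι] [Fintype κ] [AddCommMonoid R] (e : ι ≃ κ)
    (A : Matrix ι ι R) : (reindex e e A).trace = A.trace := by
  simpa [trace] using e.symm.sum_comp (fun i => A i i)

lemma PosSemidef.re_trace_nonneg {ι : Type*} [Fintype ι] {P : Matrix ι ι ℂ} (hP : P.PosSemidef) :
    0 ≤ P.trace.re :=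
  (Complex.nonneg_iff.1 hP.trace_nonneg).1

variable {ι κ : Type*} [Fintype ι] [DecidableEq ι] [Fintype κ] [DecidableEq κ]

lemma norm_apply_le_l2_opNorm (M : Matrix ι ι ℂ) (i j : ι) : ‖M i j‖ ≤ ‖M‖ := by
  set v : EuclideanSpace ℂ ι := EuclideanSpace.single j 1
  have hv : (WithLp.toLp 2 (M *ᵥ v.ofLp) : EuclideanSpace ℂ ι) i = M i j := by
    simp [v, mulVec_single]
  calc ‖M i j‖ ≤ ‖(WithLp.toLp 2 (M *ᵥ v.ofLp) : EuclideanSpace ℂ ι)‖ := hv ▸ PiLp.norm_apply_le _ i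
    _ ≤ ‖M‖ * ‖v‖ := l2_opNorm_mulVec M v
    _ = ‖M‖ := by simp [v]

lemma norm_trace_mul_le_of_posSemidef {P : Matrix ι ι ℂ} (hP : P.PosSemidef) (M : Matrix ι ι ℂ) :
    ‖(M * P).trace‖ ≤ ‖M‖ * P.trace.re := by
  set U : Matrix ι ι ℂ := (hP.1.eigenvectorUnitary : Matrix ι ι ℂ)
  have hU : U ∈ unitaryGroup ι ℂ := hP.1.eigenvectorUnitary.2
  set μ := hP.1.eigenvalues
  have hPU : P = U * diagonal (RCLike.ofReal ∘ μ) * star U := hP.1.spectral_theorem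
  have htr : (M * P).trace = ∑ i, (star U * M * U) i i * μ i := by
    calc (M * P).trace = (star U * M * U * diagonal (RCLike.ofReal ∘ μ)).trace := by
          rw [hPU, ← mul_assoc, trace_mul_cycle, ← mul_assoc]
      _ = _ := by simp [trace, mul_diagonal]
  have hnorm : ‖star U * M * U‖ = ‖M‖ := by
    rw [CStarRing.norm_mul_mem_unitary _ hU, CStarRing.norm_mem_unitary_mul _ (Unitary.star_mem hU)]
  rw [htr, hP.1.trace_eq_sum_eigenvalues, Complex.re_sum, Finset.mul_sum]
  refine (norm_sum_le _ _).trans (Finset.sum_le_sum fun i _ => ?_)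
  rw [norm_mul, Complex.norm_real, Real.norm_of_nonneg (hP.eigenvalues_nonneg i)]
  exact mul_le_mul_of_nonneg_right (hnorm ▸ norm_apply_le_l2_opNorm _ i i)
    (hP.eigenvalues_nonneg i)

lemma IsHermitian.exists_norm_le_one_mul_abs_eq {X : Matrix ι ι ℂ} (hX : X.IsHermitian) :
    ∃ S : Matrix ι ι ℂ, ‖S‖ ≤ 1 ∧ S * X = CFC.abs X ∧ S * CFC.abs X = X := by
  let s : ℝ → ℝ := fun x => if 0 ≤ x then 1 else -1
  have hmul {f g : ℝ → ℝ} (h : ∀ x, s x * f x = g x) : cfc s X * cfc f X = cfc g X := by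
    have hc (f : ℝ → ℝ) : ContinuousOn f (spectrum ℝ X) := X.finite_real_spectrum.continuousOn f
    rw [← cfc_mul s f X (hc _) (hc _)]
    exact cfc_congr fun x _ => h x
  have habs : CFC.abs X = cfc (fun x : ℝ => |x|) X := CFC.abs_eq_cfc_norm X hX.isSelfAdjoint
  have hX' : cfc (id : ℝ → ℝ) X = X := cfc_id ℝ X
  refine ⟨cfc s X, norm_cfc_le zero_le_one fun x _ => ?_, ?_, ?_⟩
  · by_cases h : 0 ≤ x <;> simp [s, h]
  · rw [habs, ← hmul (f := id) (g := fun x => |x|) fun x => ?_, hX']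
    by_cases h : 0 ≤ x <;> simp [s, h, abs_of_nonneg, abs_of_neg, not_le.1]
  · rw [habs, hmul (g := id) fun x => ?_, hX']
    by_cases h : 0 ≤ x <;> simp [s, h, abs_of_nonneg, abs_of_neg, not_le.1]

lemma IsHermitian.norm_trace_mul_le {X : Matrix ι ι ℂ} (hX : X.IsHermitian) (M : Matrix ι ι ℂ) :
    ‖(M * X).trace‖ ≤ ‖M‖ * (CFC.abs X).trace.re := by
  obtain ⟨S, hS, -, hSX⟩ := hX.exists_norm_le_one_mul_abs_eq
  have hP : (CFC.abs X).PosSemidef := nonneg_iff_posSemidef.1 (CFC.abs_nonneg X)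
  calc ‖(M * X).trace‖ = ‖(M * S * CFC.abs X).trace‖ := by rw [mul_assoc, hSX]
    _ ≤ ‖M * S‖ * (CFC.abs X).trace.re := norm_trace_mul_le_of_posSemidef hP _
    _ ≤ ‖M‖ * (CFC.abs X).trace.re := by
        gcongr
        · exact hP.re_trace_nonneg
        · calc ‖M * S‖ ≤ ‖M‖ * ‖S‖ := norm_mul_le _ _
            _ ≤ ‖M‖ := mul_le_of_le_one_right (norm_nonneg _) hS

lemma abs_reindex (e : ι ≃ κ) (A : Matrix ι ι ℂ) :
    CFC.abs (reindex e e A) = reindex e e (CFC.abs A) := by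
  refine CFC.sqrt_unique ?_
    (nonneg_iff_posSemidef.2 ((nonneg_iff_posSemidef.1 (CFC.abs_nonneg A)).submatrix _))
  simp only [reindex_apply, submatrix_mul_equiv, CFC.abs_mul_abs, star_eq_conjTranspose,
    conjTranspose_submatrix]

lemma abs_kronecker_of_posSemidef (A : Matrix ι ι ℂ) {R : Matrix κ κ ℂ} (hR : R.PosSemidef) :
    CFC.abs (A ⊗ₖ R) = CFC.abs A ⊗ₖ R := by
  refine CFC.sqrt_unique ?_
    (nonneg_iff_posSemidef.2 ((nonneg_iff_posSemidef.1 (CFC.abs_nonneg A)).kronecker hR))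
  rw [← mul_kronecker_mul, CFC.abs_mul_abs, star_eq_conjTranspose, star_eq_conjTranspose,
    conjTranspose_kronecker, ← mul_kronecker_mul, hR.1.eq]

end Matrix

lemma opNorm_eq_norm {n : ℕ} (A : Matrix (Fin n) (Fin n) ℂ) : opNorm A = ‖A‖ := rfl

section TraceNorm

variable {n : ℕ}

lemma traceNorm_eq_re_trace_abs (A : Matrix (Fin n) (Fin n) ℂ) :
    traceNorm A = (CFC.abs A).trace.re := by
  have hA := posSemidef_conjTranspose_mul_self A
  rw [CFC.abs, star_eq_conjTranspose, CFC.sqrt_eq_real_sqrt _ hA.nonneg, cfcₙ_eq_cfc,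
    hA.1.cfc_eq, IsHermitian.cfc, Unitary.conjStarAlgAut_apply]
  rfl

lemma traceNorm_of_posSemidef {P : Matrix (Fin n) (Fin n) ℂ} (hP : P.PosSemidef) :
    traceNorm P = P.trace.re := by
  rw [traceNorm_eq_re_trace_abs, CFC.abs_of_nonneg P hP.nonneg]

lemma traceNorm_nonneg (A : Matrix (Fin n) (Fin n) ℂ) : 0 ≤ traceNorm A := by
  rw [traceNorm_eq_re_trace_abs]
  exact (nonneg_iff_posSemidef.1 (CFC.abs_nonneg A)).re_trace_nonneg

lemma traceNorm_neg (A : Matrix (Fin n) (Fin n) ℂ) : traceNorm (-A) = traceNorm A := by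
  rw [traceNorm_eq_re_trace_abs, traceNorm_eq_re_trace_abs, CFC.abs_neg]

lemma Matrix.IsHermitian.norm_trace_mul_le_traceNorm {X : Matrix (Fin n) (Fin n) ℂ}
    (hX : X.IsHermitian) (M : Matrix (Fin n) (Fin n) ℂ) : ‖(M * X).trace‖ ≤ ‖M‖ * traceNorm X :=
  traceNorm_eq_re_trace_abs X ▸ hX.norm_trace_mul_le M

lemma Matrix.IsHermitian.exists_traceNorm_eq_re_trace_mul {X : Matrix (Fin n) (Fin n) ℂ}
    (hX : X.IsHermitian) :
    ∃ S : Matrix (Fin n) (Fin n) ℂ, ‖S‖ ≤ 1 ∧ traceNorm X = (S * X).trace.re := by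
  obtain ⟨S, hS, hSX, -⟩ := hX.exists_norm_le_one_mul_abs_eq
  exact ⟨S, hS, by rw [hSX, traceNorm_eq_re_trace_abs]⟩

lemma traceNorm_add_le {A B : Matrix (Fin n) (Fin n) ℂ} (hA : A.IsHermitian) (hB : B.IsHermitian) :
    traceNorm (A + B) ≤ traceNorm A + traceNorm B := by
  obtain ⟨S, hS, hSAB⟩ := (hA.add hB).exists_traceNorm_eq_re_trace_mul
  have bound {X : Matrix (Fin n) (Fin n) ℂ} (hX : X.IsHermitian) : (S * X).trace.re ≤ traceNorm X :=
    calc (S * X).trace.re ≤ ‖(S * X).trace‖ := Complex.re_le_norm _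
      _ ≤ ‖S‖ * traceNorm X := hX.norm_trace_mul_le_traceNorm S
      _ ≤ traceNorm X := mul_le_of_le_one_left (traceNorm_nonneg X) hS
  rw [hSAB, mul_add, trace_add, Complex.add_re]
  exact add_le_add (bound hA) (bound hB)

lemma traceNorm_sub_le {A B : Matrix (Fin n) (Fin n) ℂ} (hA : A.IsHermitian) (hB : B.IsHermitian) :
    traceNorm (A - B) ≤ traceNorm A + traceNorm B := by
  simpa [sub_eq_add_neg, traceNorm_neg] using traceNorm_add_le hA hB.neg

lemma traceNorm_reindex_kronecker {p q : ℕ} (e : Fin p × Fin q ≃ Fin n)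
    (A : Matrix (Fin p) (Fin p) ℂ) {R : Matrix (Fin q) (Fin q) ℂ} (hR : R.PosSemidef) :
    traceNorm (reindex e e (A ⊗ₖ R)) = traceNorm A * R.trace.re := by
  have hR_im : R.trace.im = 0 := (Complex.nonneg_iff.1 hR.trace_nonneg).2.symm
  rw [traceNorm_eq_re_trace_abs, traceNorm_eq_re_trace_abs, abs_reindex,
    abs_kronecker_of_posSemidef _ hR, trace_reindex, trace_kronecker, Complex.mul_re, hR_im,
    mul_zero, sub_zero]

end TraceNorm

namespace IsKrausChannel

variable {N : ℕ} {Φ : Matrix (Fin N) (Fin N) ℂ → Matrix (Fin N) (Fin N) ℂ}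

lemma map_sub (hΦ : IsKrausChannel Φ) (A B : Matrix (Fin N) (Fin N) ℂ) :
    Φ (A - B) = Φ A - Φ B := by
  obtain ⟨m, K, -, hΦK⟩ := hΦ
  simp only [hΦK, mul_sub, sub_mul, Finset.sum_sub_distrib]

lemma posSemidef (hΦ : IsKrausChannel Φ) {ρ : Matrix (Fin N) (Fin N) ℂ} (hρ : ρ.PosSemidef) :
    (Φ ρ).PosSemidef := by
  obtain ⟨m, K, -, hΦK⟩ := hΦ
  rw [hΦK]
  exact posSemidef_sum _ fun j _ => hρ.mul_mul_conjTranspose_same (K j)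

lemma trace_map (hΦ : IsKrausChannel Φ) (ρ : Matrix (Fin N) (Fin N) ℂ) :
    (Φ ρ).trace = ρ.trace := by
  obtain ⟨m, K, hK, hΦK⟩ := hΦ
  simp only [hΦK, trace_sum, trace_mul_cycle (K _) ρ]
  rw [← trace_sum, ← Finset.sum_mul, hK, one_mul]

lemma traceNorm_map_le (hΦ : IsKrausChannel Φ) {X : Matrix (Fin N) (Fin N) ℂ}
    (hX : X.IsHermitian) : traceNorm (Φ X) ≤ traceNorm X := by
  have hP : (X⁺).PosSemidef := nonneg_iff_posSemidef.1 (CFC.posPart_nonneg X)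
  have hQ : (X⁻).PosSemidef := nonneg_iff_posSemidef.1 (CFC.negPart_nonneg X)
  calc traceNorm (Φ X) = traceNorm (Φ X⁺ - Φ X⁻) := by
        rw [← hΦ.map_sub, CFC.posPart_sub_negPart X hX.isSelfAdjoint]
    _ ≤ traceNorm (Φ X⁺) + traceNorm (Φ X⁻) :=
        traceNorm_sub_le (hΦ.posSemidef hP).1 (hΦ.posSemidef hQ).1
    _ = (X⁺ + X⁻).trace.re := by
        rw [traceNorm_of_posSemidef (hΦ.posSemidef hP), traceNorm_of_posSemidef (hΦ.posSemidef hQ),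
          hΦ.trace_map, hΦ.trace_map, trace_add, Complex.add_re]
    _ = traceNorm X := by
        rw [CFC.posPart_add_negPart X hX.isSelfAdjoint, traceNorm_eq_re_trace_abs]

end IsKrausChannel

lemma isKrausChannel_unitary_conj {N : ℕ} {W : Matrix (Fin N) (Fin N) ℂ}
    (hW : W ∈ unitaryGroup (Fin N) ℂ) : IsKrausChannel (fun ρ => W * ρ * Wᴴ) :=
  ⟨1, fun _ => W, by simpa [star_eq_conjTranspose] using hW.1, fun ρ => by simp⟩

def IsDensityMatrix {n : ℕ} (ρ : Matrix (Fin n) (Fin n) ℂ) : Prop :=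
  ρ.PosSemidef ∧ ρ.trace = 1

namespace IsDensityMatrix

variable {n : ℕ} {ρ : Matrix (Fin n) (Fin n) ℂ}

lemma map (hρ : IsDensityMatrix ρ) {Φ : Matrix (Fin n) (Fin n) ℂ → Matrix (Fin n) (Fin n) ℂ}
    (hΦ : IsKrausChannel Φ) : IsDensityMatrix (Φ ρ) :=
  ⟨hΦ.posSemidef hρ.1, hΦ.trace_map ρ ▸ hρ.2⟩

lemma reindex_kronecker (hρ : IsDensityMatrix ρ) {q N : ℕ} {R : Matrix (Fin q) (Fin q) ℂ}
    (hR : IsDensityMatrix R) (e : Fin n × Fin q ≃ Fin N) :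
    IsDensityMatrix (reindex e e (ρ ⊗ₖ R)) :=
  ⟨(hρ.1.kronecker hR.1).submatrix _, by rw [trace_reindex, trace_kronecker, hρ.2, hR.2, one_mul]⟩

end IsDensityMatrix

lemma isDensityMatrix_vecMulVec_star {q : ℕ} {a : Fin q → ℂ} (ha : ∑ i, ‖a i‖ ^ 2 = 1) :
    IsDensityMatrix (vecMulVec a (star a)) := by
  refine ⟨posSemidef_vecMulVec_self_star a, ?_⟩
  simp only [trace_vecMulVec, dotProduct, Pi.star_apply, Complex.star_def, Complex.mul_conj,
    Complex.normSq_eq_norm_sq]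
  exact_mod_cast ha

noncomputable def phaseDist {n : ℕ} (W : Matrix (Fin n) (Fin n) ℂ) : ℝ :=
  ⨅ φ : {z : ℂ // ‖z‖ = 1}, opNorm (1 - (φ : ℂ) • W)

section UnitaryConj

variable {n : ℕ} {ρ W : Matrix (Fin n) (Fin n) ℂ}

lemma traceNorm_sub_unitary_conj_le_of_posSemidef (hρ : ρ.PosSemidef)
    (hW : W ∈ unitaryGroup (Fin n) ℂ) {φ : ℂ} (hφ : ‖φ‖ = 1) :
    traceNorm (ρ - W * ρ * Wᴴ) ≤ 2 * ‖1 - φ • W‖ * ρ.trace.re := by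
  set V := φ • W
  have hφφ : star φ * φ = 1 := by
    rw [mul_comm, Complex.star_def, Complex.mul_conj', hφ, Complex.ofReal_one, one_pow]
  have hVρ : V * ρ * Vᴴ = W * ρ * Wᴴ := by
    simp only [V, conjTranspose_smul, Matrix.smul_mul, Matrix.mul_smul, smul_smul, hφφ, one_smul]
  obtain ⟨S, hS, hX⟩ :=
    (hρ.1.sub (hρ.mul_mul_conjTranspose_same W).1).exists_traceNorm_eq_re_trace_mul
  have hsplit : (S * (ρ - W * ρ * Wᴴ)).trace =
      (S * (1 - V) * ρ).trace + ((1 - V)ᴴ * S * V * ρ).trace := by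
    have h : S * (ρ - V * ρ * Vᴴ) = S * (1 - V) * ρ + S * V * ρ * (1 - V)ᴴ := by
      simp only [conjTranspose_sub, conjTranspose_one]
      noncomm_ring
    rw [← hVρ, h, trace_add, trace_mul_cycle (S * V), ← mul_assoc]
  have hnorm₁ : ‖S * (1 - V)‖ ≤ ‖1 - V‖ :=
    (norm_mul_le _ _).trans (mul_le_of_le_one_left (norm_nonneg _) hS)
  have hnorm₂ : ‖(1 - V)ᴴ * S * V‖ ≤ ‖1 - V‖ := by
    rw [show (1 - V)ᴴ * S * V = φ • ((1 - V)ᴴ * S * W) by simp [V], norm_smul, hφ, one_mul,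
      CStarRing.norm_mul_mem_unitary _ hW]
    calc ‖(1 - V)ᴴ * S‖ ≤ ‖(1 - V)ᴴ‖ * ‖S‖ := norm_mul_le _ _
      _ ≤ ‖1 - V‖ := by
        rw [l2_opNorm_conjTranspose]
        exact mul_le_of_le_one_right (norm_nonneg _) hS
  have htr := hρ.re_trace_nonneg
  calc traceNorm (ρ - W * ρ * Wᴴ) ≤ ‖(S * (1 - V) * ρ).trace‖ + ‖((1 - V)ᴴ * S * V * ρ).trace‖ := by
        rw [hX, hsplit]
        exact (Complex.re_le_norm _).trans (norm_add_le _ _)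
    _ ≤ ‖S * (1 - V)‖ * ρ.trace.re + ‖(1 - V)ᴴ * S * V‖ * ρ.trace.re :=
        add_le_add (norm_trace_mul_le_of_posSemidef hρ _) (norm_trace_mul_le_of_posSemidef hρ _)
    _ ≤ 2 * ‖1 - V‖ * ρ.trace.re := by nlinarith

lemma IsDensityMatrix.traceNorm_sub_unitary_conj_le (hρ : IsDensityMatrix ρ)
    (hW : W ∈ unitaryGroup (Fin n) ℂ) : traceNorm (ρ - W * ρ * Wᴴ) ≤ 2 * phaseDist W := by
  have h (φ : {z : ℂ // ‖z‖ = 1}) : traceNorm (ρ - W * ρ * Wᴴ) / 2 ≤ opNorm (1 - (φ : ℂ) • W) := by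
    have := traceNorm_sub_unitary_conj_le_of_posSemidef hρ.1 hW φ.2
    rw [hρ.2, Complex.one_re, mul_one] at this
    rw [opNorm_eq_norm]
    linarith
  have : Nonempty {z : ℂ // ‖z‖ = 1} := ⟨⟨1, norm_one⟩⟩
  have hinf : traceNorm (ρ - W * ρ * Wᴴ) / 2 ≤ phaseDist W := le_ciInf h
  linarith

end UnitaryConj

section Circuit

variable {N : ℕ} {ρ ρ' : Matrix (Fin N) (Fin N) ℂ}

lemma traceNorm_map_sub_unitary_conj_map_le
    {Φ : Matrix (Fin N) (Fin N) ℂ → Matrix (Fin N) (Fin N) ℂ} (hΦ : IsKrausChannel Φ)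
    {W : Matrix (Fin N) (Fin N) ℂ} (hW : W ∈ unitaryGroup (Fin N) ℂ)
    (hρ : ρ.PosSemidef) (hρ' : IsDensityMatrix ρ') :
    traceNorm (Φ ρ - W * Φ ρ' * Wᴴ) ≤ traceNorm (ρ - ρ') + 2 * phaseDist W := by
  have hΦρ' := hΦ.posSemidef hρ'.1
  calc traceNorm (Φ ρ - W * Φ ρ' * Wᴴ) = traceNorm ((Φ ρ - Φ ρ') + (Φ ρ' - W * Φ ρ' * Wᴴ)) := by
        rw [sub_add_sub_cancel]
    _ ≤ traceNorm (Φ ρ - Φ ρ') + traceNorm (Φ ρ' - W * Φ ρ' * Wᴴ) :=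
        traceNorm_add_le ((hΦ.posSemidef hρ).1.sub hΦρ'.1)
          (hΦρ'.1.sub (hΦρ'.mul_mul_conjTranspose_same W).1)
    _ ≤ traceNorm (ρ - ρ') + 2 * phaseDist W := by
        gcongr
        · rw [← hΦ.map_sub]
          exact hΦ.traceNorm_map_le (hρ.1.sub hρ'.1.1)
        · exact (hρ'.map hΦ).traceNorm_sub_unitary_conj_le hW

lemma traceNorm_foldl_sub_foldl_le {m : ℕ}
    {E : Fin m → Matrix (Fin N) (Fin N) ℂ → Matrix (Fin N) (Fin N) ℂ}
    (hE : ∀ i, IsKrausChannel (E i)) {U : Fin m → Matrix (Fin N) (Fin N) ℂ}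
    (hU : ∀ i, U i ∈ unitaryGroup (Fin N) ℂ) (hρ : ρ.PosSemidef) (hρ' : IsDensityMatrix ρ') :
    traceNorm ((List.ofFn E).foldl (fun ρ Φ => Φ ρ) ρ -
        (List.ofFn (fun i => fun ρ => U i * E i ρ * (U i)ᴴ)).foldl (fun ρ Φ => Φ ρ) ρ') ≤
      traceNorm (ρ - ρ') + 2 * ∑ i, phaseDist (U i) := by
  induction m generalizing ρ ρ' with
  | zero => simp
  | succ m ih =>
    rw [List.ofFn_succ, List.ofFn_succ, List.foldl_cons, List.foldl_cons, Fin.sum_univ_succ]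
    have hrest := ih (fun i => hE i.succ) (fun i => hU i.succ) ((hE 0).posSemidef hρ)
      ((hρ'.map (hE 0)).map (isKrausChannel_unitary_conj (hU 0)))
    have hfirst := traceNorm_map_sub_unitary_conj_map_le (hE 0) (hU 0) hρ hρ'
    linarith

end Circuit

/-- The intermediate trace-norm bound in the proof of Theorem 1: the trace distance
between the outputs of the original and the attacked classifier circuits is bounded
by twice the sum of the phase-optimized operator-norm distances of the adversarial
gates to the identity. -/
theorem trace_norm_output_bound (d da n : ℕ)
    (E : Fin n → Matrix (Fin (2 ^ (d + da))) (Fin (2 ^ (d + da))) ℂ →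
      Matrix (Fin (2 ^ (d + da))) (Fin (2 ^ (d + da))) ℂ)
    (hE : ∀ i, IsKrausChannel (E i))
    (U0 : Matrix (Fin (2 ^ d)) (Fin (2 ^ d)) ℂ)
    (hU0 : U0 ∈ Matrix.unitaryGroup (Fin (2 ^ d)) ℂ)
    (U : Fin n → Matrix (Fin (2 ^ (d + da))) (Fin (2 ^ (d + da))) ℂ)
    (hU : ∀ i, U i ∈ Matrix.unitaryGroup (Fin (2 ^ (d + da))) ℂ)
    (σ : Matrix (Fin (2 ^ d)) (Fin (2 ^ d)) ℂ)
    (hσ : σ.PosSemidef ∧ σ.trace = 1)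
    (a : Fin (2 ^ da) → ℂ) (ha : ∑ i, ‖a i‖ ^ 2 = 1)
    -- the Kronecker-product embedding `ρ ⊗ aaᴴ`, reindexed to live on `Fin (2 ^ (d + da))`
    (emb : Matrix (Fin (2 ^ d)) (Fin (2 ^ d)) ℂ →
      Matrix (Fin (2 ^ (d + da))) (Fin (2 ^ (d + da))) ℂ)
    (hemb : ∀ ρ, emb ρ =
      Matrix.reindex (finProdFinEquiv.trans (finCongr (pow_add 2 d da).symm))
        (finProdFinEquiv.trans (finCongr (pow_add 2 d da).symm))
        (ρ ⊗ₖ Matrix.vecMulVec a (star a))) :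
    traceNorm ((List.ofFn E).foldl (fun ρ Φ => Φ ρ) (emb σ) -
        (List.ofFn (fun i => fun ρ => U i * E i ρ * (U i)ᴴ)).foldl (fun ρ Φ => Φ ρ)
          (emb (U0 * σ * U0ᴴ))) ≤
      2 * ((⨅ φ : {z : ℂ // ‖z‖ = 1}, opNorm (1 - (φ : ℂ) • U0)) +
        ∑ i, ⨅ φ : {z : ℂ // ‖z‖ = 1}, opNorm (1 - (φ : ℂ) • U i)) := by
  have hσ : IsDensityMatrix σ := hσ
  have hR : IsDensityMatrix (vecMulVec a (star a)) := isDensityMatrix_vecMulVec_star ha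
  have hσ' : IsDensityMatrix (U0 * σ * U0ᴴ) := hσ.map (isKrausChannel_unitary_conj hU0)
  have hinput : traceNorm (emb σ - emb (U0 * σ * U0ᴴ)) ≤ 2 * phaseDist U0 := by
    rw [hemb, hemb, ← reindex_sub, ← sub_kronecker, traceNorm_reindex_kronecker _ _ hR.1, hR.2,
      Complex.one_re, mul_one]
    exact hσ.traceNorm_sub_unitary_conj_le hU0
  have hcircuit := traceNorm_foldl_sub_foldl_le hE hU (hemb σ ▸ (hσ.reindex_kronecker hR _).1)
    (hemb _ ▸ hσ'.reindex_kronecker hR _)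
  unfold phaseDist at hinput hcircuit
  linarith
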